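/- Let F be a nice graph: strictly 1-balanced, 3-connected, and not transformable into an isomorphic graph by adding one edge and then deleting one edge. Let H_F be an F-graph whose underlying multi-hypergraph contains no avoidable configuration. Then every copy of F contained in the union graph G(H_F) is already an F-edge of H_F. -/

import Mathlib

/-- `E` is (the edge set of) a copy of the graph `F` on the vertex type `V`: the image of
the edges of `F` under an injection of the vertices. -/
def IsCopy {α V : Type*} (F : SimpleGraph α) (E : Finset (Sym2 V)) : Prop :=
  ∃ φ : α ↪ V, (↑E : Set (Sym2 V)) = Sym2.map φ '' F.edgeSet

/-- The set of vertices spanned by a finite set of graph edges. -/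
def vertsOf {V : Type*} [DecidableEq V] (E : Finset (Sym2 V)) : Finset V :=
  E.sup fun e => Sym2.lift ⟨fun a b => ({a, b} : Finset V), fun a b => Finset.pair_comm a b⟩ e

/-- `F` is 2-connected: at least 3 vertices and removing any single vertex leaves a
connected graph. -/
def TwoConnected {α : Type*} [Fintype α] (F : SimpleGraph α) : Prop :=
  3 ≤ Fintype.card α ∧ ∀ v : α, (F.induce ({v}ᶜ : Set α)).Connected

/-- The 1-density `d₁(F) = e(F)/(|F|-1)`. -/
noncomputable def oneDensity {α : Type*} [Fintype α] (F : SimpleGraph α) : ℚ :=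
  (F.edgeSet.ncard : ℚ) / ((Fintype.card α : ℚ) - 1)

/-- `F` is strictly 1-balanced: every proper subgraph with at least two vertices has
strictly smaller 1-density. -/
def StrictlyOneBalanced {α : Type*} [Fintype α] (F : SimpleGraph α) : Prop :=
  ∀ H : F.Subgraph, H ≠ ⊤ → 2 ≤ H.verts.ncard →
    (H.edgeSet.ncard : ℚ) / ((H.verts.ncard : ℚ) - 1) < oneDensity F

/-- `F` is 3-connected: at least 4 vertices and removing any (at most two) vertices leaves
a connected graph. -/
def ThreeConnected {α : Type*} [Fintype α] (F : SimpleGraph α) : Prop :=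
  4 ≤ Fintype.card α ∧ ∀ u v : α, (F.induce ({u, v}ᶜ : Set α)).Connected

/-- `F` cannot be transformed into an isomorphic graph by adding one (non-loop, absent)
edge and then deleting a different edge. -/
def AddDeleteRigid {α : Type*} (F : SimpleGraph α) : Prop :=
  ∀ e : Sym2 α, ¬ e.IsDiag → e ∉ F.edgeSet → ∀ e' ∈ insert e F.edgeSet, e' ≠ e →
    ¬ Nonempty ((SimpleGraph.fromEdgeSet (insert e F.edgeSet \ {e'})) ≃g F)

/-- `F` is nice: strictly 1-balanced, 3-connected, and not transformable into an
isomorphic graph by adding one edge and deleting another. -/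
def Nice {α : Type*} [Fintype α] (F : SimpleGraph α) : Prop :=
  StrictlyOneBalanced F ∧ ThreeConnected F ∧ AddDeleteRigid F

/-- Connectivity of a configuration of hyperedges (each hyperedge being the vertex set of
a copy, i.e. `vertsOf E`). -/
def ConfigConnected {V : Type*} [DecidableEq V] (𝒮 : Finset (Finset (Sym2 V))) : Prop :=
  ∀ u ∈ 𝒮.sup vertsOf, ∀ v ∈ 𝒮.sup vertsOf,
    Relation.ReflTransGen (fun x y => ∃ E ∈ 𝒮, x ∈ vertsOf E ∧ y ∈ vertsOf E) u v

/-- The multi-hypergraph underlying the `F`-graph `𝓕` contains no avoidable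
configuration. -/
def NoAvoidableConfig {V : Type*} [DecidableEq V] (r : ℕ)
    (𝓕 : Finset (Finset (Sym2 V))) : Prop :=
  ¬ ∃ 𝒮 ⊆ 𝓕, 𝒮.Nonempty ∧ ConfigConnected 𝒮 ∧ 𝒮.card ≤ 2 * r.choose 2 ∧
      2 ≤ ((r : ℤ) - 1) * 𝒮.card + 1 - (𝒮.sup vertsOf).card

/-! Suppose a copy `E₀` of `F` lies in the union graph but is not an `F`-edge. Cover its edges
by `m ≤ e(F)` members of `𝓕` and read each of them back on `F` as a *trace*: the vertices and
edges it shares with `E₀`. Strict 1-balancedness bounds the edges of every trace by its vertices,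
while the chosen members form a connected configuration, so the absence of avoidable
configurations (nullity at most one) bounds the total number of trace vertices by `|F| + m`;
summing the balance inequalities shows that this bound is attained.

If some trace contains all of `V(E₀)`, the count forces `m = 2` and that member to share all but
one edge with `E₀`, so adding one edge to `F` and deleting another gives a copy of `F`. Otherwise
the vertices lying in a single trace are cut off from the rest of `F` by the shared vertices of
that trace, so by 3-connectivity every trace with such a vertex has at least three shared
vertices; double counting then leaves `m = |F|` traces, each a single edge, whence
`e(F) ≤ |F|`, against minimum degree three. -/

section

variable {α : Type*} [Fintype α]

lemma StrictlyOneBalanced.card_mul_add_one_le {F : SimpleGraph α} [DecidableRel F.Adj]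
    (hb : StrictlyOneBalanced F) {W : Finset α} {T : Finset (Sym2 α)} (hT : T ⊆ F.edgeFinset)
    (hTW : ∀ ε ∈ T, ∀ a ∈ ε, a ∈ W) (hW : 2 ≤ W.card) (hne : T ≠ F.edgeFinset) :
    T.card * (Fintype.card α - 1) + 1 ≤ F.edgeFinset.card * (W.card - 1) := by
  let H : F.Subgraph :=
    { verts := W
      Adj a b := s(a, b) ∈ T
      adj_sub h := by simpa using hT h
      edge_vert h := hTW _ h _ (Sym2.mem_mk_left _ _)
      symm := ⟨fun a b h => by rwa [Sym2.eq_swap]⟩ }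
  have hHT : H.edgeSet = T := by
    ext ε
    induction ε using Sym2.ind
    exact SimpleGraph.Subgraph.mem_edgeSet
  have hHne : H ≠ ⊤ := by
    intro htop
    rw [htop, SimpleGraph.Subgraph.edgeSet_top, ← SimpleGraph.coe_edgeFinset] at hHT
    exact hne (Finset.coe_injective hHT).symm
  have hHW : H.verts.ncard = W.card := Set.ncard_coe_finset W
  have hlt := hb H hHne (hHW ▸ hW)
  rw [oneDensity, hHT, hHW, ← SimpleGraph.coe_edgeFinset, Set.ncard_coe_finset,
    Set.ncard_coe_finset] at hlt
  have hr : W.card ≤ Fintype.card α := Finset.card_le_univ W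
  rw [div_lt_div_iff₀ (sub_pos.mpr (by exact_mod_cast (by omega : 1 < W.card)))
    (sub_pos.mpr (by exact_mod_cast (by omega : 1 < Fintype.card α)))] at hlt
  have : ((T.card * (Fintype.card α - 1) : ℕ) : ℚ) <
      (F.edgeFinset.card * (W.card - 1) : ℕ) := by
    push_cast [Nat.cast_sub (by omega : 1 ≤ Fintype.card α),
      Nat.cast_sub (by omega : 1 ≤ W.card)]
    exact hlt
  exact_mod_cast this

namespace ThreeConnected

variable {F : SimpleGraph α}

lemma reachable_induce_compl (h3 : ThreeConnected F) {S : Finset α} (hS : S.card ≤ 2)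
    {p q : α} (hp : p ∉ S) (hq : q ∉ S) :
    (F.induce (↑S)ᶜ).Reachable ⟨p, hp⟩ ⟨q, hq⟩ := by
  classical
  have hSpq : S ⊆ ({p, q} : Finset α)ᶜ := by
    intro x hx
    simp only [Finset.mem_compl, Finset.mem_insert, Finset.mem_singleton]
    rintro (rfl | rfl) <;> contradiction
  obtain ⟨U, hSU, hUpq, hU⟩ := Finset.exists_subsuperset_card_eq hSpq hS (by
    rw [Finset.card_compl]
    have := Finset.card_le_two (a := p) (b := q)
    have := h3.1
    omega)
  obtain ⟨u, v, -, rfl⟩ := Finset.card_eq_two.mp hU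
  have hpq : ∀ x ∈ ({p, q} : Finset α), x ∈ ({u, v} : Set α)ᶜ := fun x hx hxuv =>
    Finset.mem_compl.mp (hUpq (by simpa using hxuv)) hx
  have hle : ({u, v} : Set α)ᶜ ≤ (↑S)ᶜ :=
    Set.compl_subset_compl.mpr (by simpa using Finset.coe_subset.mpr hSU)
  exact ((h3.2 u v).preconnected ⟨p, hpq p (by simp)⟩ ⟨q, hpq q (by simp)⟩).map
    (F.induceHomOfLE hle).toHom

lemma preconnected (h3 : ThreeConnected F) : F.Preconnected := fun p q =>
  (h3.reachable_induce_compl (S := ∅) (by simp) (Finset.notMem_empty p)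
    (Finset.notMem_empty q)).map (SimpleGraph.Embedding.induce _).toHom

/-- `W \ P` separates `P` from the vertices outside `W`. -/
lemma two_lt_card_sdiff [DecidableEq α] {P W : Finset α} (h3 : ThreeConnected F)
    (hPW : P ⊆ W) (hP : P.Nonempty) (hW : W ≠ Finset.univ) (hcl : ∀ a ∈ P, ∀ b, F.Adj a b → b ∈ W) :
    2 < (W \ P).card := by
  by_contra! hS
  obtain ⟨p, hp⟩ := hP
  obtain ⟨q, hq⟩ : ∃ q, q ∉ W := by
    by_contra! h
    exact hW (Finset.eq_univ_of_forall h)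
  have hpS : p ∉ W \ P := fun h => (Finset.mem_sdiff.mp h).2 hp
  have hqS : q ∉ W \ P := fun h => hq (Finset.mem_sdiff.mp h).1
  obtain ⟨walk⟩ := h3.reachable_induce_compl hS hpS hqS
  obtain ⟨d, -, hd, hd'⟩ := walk.exists_boundary_dart {x | x.1 ∈ P} hp (fun h => hq (hPW h))
  exact d.snd.2 (Finset.mem_sdiff.mpr ⟨hcl _ hd _ d.adj, hd'⟩)

lemma three_le_degree [DecidableRel F.Adj] (h3 : ThreeConnected F) (a : α) :
    3 ≤ F.degree a := by
  classical
  by_contra! h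
  have hsep := h3.two_lt_card_sdiff (P := {a}) (W := insert a (F.neighborFinset a))
    (by simp) (by simp) ?_ (by simp +contextual)
  · rw [Finset.insert_sdiff_of_mem _ (Finset.mem_singleton_self a),
      Finset.sdiff_singleton_eq_erase, Finset.erase_eq_of_notMem (by simp),
      F.card_neighborFinset_eq_degree] at hsep
    omega
  · intro huniv
    have := Finset.card_insert_le a (F.neighborFinset a)
    rw [huniv, Finset.card_univ, F.card_neighborFinset_eq_degree] at this
    have := h3.1
    omega

lemma exists_adj (h3 : ThreeConnected F) (a : α) : ∃ b, F.Adj a b := by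
  classical
  have : 0 < (F.neighborFinset a).card := by
    rw [F.card_neighborFinset_eq_degree]; have := h3.three_le_degree a; omega
  obtain ⟨b, hb⟩ := Finset.card_pos.mp this
  exact ⟨b, (F.mem_neighborFinset a b).mp hb⟩

lemma three_mul_card_le [DecidableRel F.Adj] (h3 : ThreeConnected F) :
    3 * Fintype.card α ≤ 2 * F.edgeFinset.card := by
  rw [← F.sum_degrees_eq_twice_card_edges]
  simpa [mul_comm] using
    Finset.card_nsmul_le_sum Finset.univ (F.degree ·) 3 fun a _ => h3.three_le_degree a

end ThreeConnected

lemma AddDeleteRigid.card_edgeFinset_sdiff_ne_one [DecidableEq α] {F G : SimpleGraph α}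
    [DecidableRel F.Adj] [DecidableRel G.Adj] (hrig : AddDeleteRigid F) (e : G ≃g F) :
    (F.edgeFinset \ G.edgeFinset).card ≠ 1 := by
  intro h
  have h' : (G.edgeFinset \ F.edgeFinset).card = 1 := by
    have := Finset.card_sdiff_add_card_inter F.edgeFinset G.edgeFinset
    have := Finset.card_sdiff_add_card_inter G.edgeFinset F.edgeFinset
    rw [Finset.inter_comm] at this
    have := e.card_edgeFinset_eq
    omega
  obtain ⟨ε', hε'⟩ := Finset.card_eq_one.mp h
  obtain ⟨ε, hε⟩ := Finset.card_eq_one.mp h'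
  simp only [Finset.ext_iff, Finset.mem_sdiff, SimpleGraph.mem_edgeFinset,
    Finset.mem_singleton] at hε' hε
  have hG : G.edgeSet = insert ε F.edgeSet \ {ε'} := by
    ext x
    have := hε' x
    have := hε x
    simp only [Set.mem_sdiff, Set.mem_insert_iff, Set.mem_singleton_iff]
    grind
  refine hrig ε (G.not_isDiag_of_mem_edgeSet ((hε ε).mpr rfl).1) ((hε ε).mpr rfl).2 ε'
    (Set.mem_insert_of_mem _ ((hε' ε').mpr rfl).1) ?_ ⟨?_⟩
  · rintro rfl
    exact ((hε ε').mpr rfl).2 ((hε' ε').mpr rfl).1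
  · rwa [← hG, SimpleGraph.fromEdgeSet_edgeSet]

lemma sum_filter_two_le_le (g : α → ℕ) :
    ∑ a ∈ Finset.univ.filter (2 ≤ g ·), g a ≤ 2 * ∑ a, (g a - 1) :=
  calc ∑ a ∈ Finset.univ.filter (2 ≤ g ·), g a
      ≤ ∑ a ∈ Finset.univ.filter (2 ≤ g ·), 2 * (g a - 1) :=
        Finset.sum_le_sum fun a ha => by have := (Finset.mem_filter.mp ha).2; omega
    _ ≤ ∑ a, 2 * (g a - 1) := Finset.sum_le_sum_of_subset (Finset.filter_subset _ _)
    _ = 2 * ∑ a, (g a - 1) := (Finset.mul_sum _ _ _).symm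

lemma exists_subfamily_card_le {β γ : Type*} [DecidableEq γ] {E₀ : Finset β} {𝓕 : Finset γ}
    {R : β → γ → Prop} (h : ∀ e ∈ E₀, ∃ E ∈ 𝓕, R e E) :
    ∃ 𝒮 ⊆ 𝓕, 𝒮.card ≤ E₀.card ∧ (∀ e ∈ E₀, ∃ E ∈ 𝒮, R e E) ∧ ∀ E ∈ 𝒮, ∃ e ∈ E₀, R e E := by
  choose g hg𝓕 hgR using h
  refine ⟨E₀.attach.image fun e => g e.1 e.2, ?_, ?_, ?_, ?_⟩
  · simpa [Finset.image_subset_iff] using fun e he => hg𝓕 e he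
  · simpa using Finset.card_image_le (s := E₀.attach)
  · exact fun e he =>
      ⟨g e he, Finset.mem_image.mpr ⟨⟨e, he⟩, Finset.mem_attach _ _, rfl⟩, hgR e he⟩
  · simp only [Finset.mem_image, Finset.mem_attach, true_and, Subtype.exists]
    rintro _ ⟨e, he, rfl⟩
    exact ⟨e, he, hgR e he⟩

lemma mem_vertsOf {V : Type*} [DecidableEq V] {E : Finset (Sym2 V)} {x : V} :
    x ∈ vertsOf E ↔ ∃ e ∈ E, x ∈ e := by
  simp only [vertsOf, Finset.mem_sup]
  refine exists_congr fun e => and_congr_right fun _ => ?_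
  induction e using Sym2.ind
  simp

section TraceCover

variable [DecidableEq α] {ι : Type*} {F : SimpleGraph α} [DecidableRel F.Adj]

/-- The traces of copies `i ∈ s` covering the edges of a fixed copy `E₀` of `F`: `w i` and
`T i` are the vertices and edges shared with `E₀`, read back on `F` through `E₀ ≅ F`. -/
structure IsTraceCover (F : SimpleGraph α) [DecidableRel F.Adj] (s : Finset ι)
    (w : ι → Finset α) (T : ι → Finset (Sym2 α)) : Prop where
  subset_edgeFinset : ∀ i ∈ s, T i ⊆ F.edgeFinset
  mem_of_mem_edge : ∀ i ∈ s, ∀ ε ∈ T i, ∀ a ∈ ε, a ∈ w i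
  nonempty : ∀ i ∈ s, (T i).Nonempty
  ne_edgeFinset : ∀ i ∈ s, T i ≠ F.edgeFinset
  edgeFinset_subset : F.edgeFinset ⊆ s.biUnion T

def traceDegree (s : Finset ι) (w : ι → Finset α) (a : α) : ℕ :=
  (s.filter (a ∈ w ·)).card

lemma sum_card_filter_eq_sum_traceDegree (s : Finset ι) (w : ι → Finset α) (p : α → Prop)
    [DecidablePred p] :
    ∑ i ∈ s, ((w i).filter p).card = ∑ a ∈ Finset.univ.filter p, traceDegree s w a := by
  unfold traceDegree
  have := Finset.sum_card_bipartiteAbove_eq_sum_card_bipartiteBelow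
    (s := s) (t := Finset.univ.filter p) (r := fun i a => a ∈ w i)
  convert this using 3 with i
  · ext a
    simp [Finset.bipartiteAbove, and_comm]
  · rfl

namespace IsTraceCover

variable {s : Finset ι} {w : ι → Finset α} {T : ι → Finset (Sym2 α)}
  (h : IsTraceCover F s w T)
include h

lemma adj_of_mem {i : ι} (hi : i ∈ s) {a b : α} (hab : s(a, b) ∈ T i) : F.Adj a b :=
  F.mem_edgeFinset.mp (h.subset_edgeFinset i hi hab)

lemma exists_mem_of_adj {a b : α} (hab : F.Adj a b) : ∃ i ∈ s, a ∈ w i ∧ b ∈ w i := by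
  obtain ⟨i, hi, hab⟩ := Finset.mem_biUnion.mp
    (h.edgeFinset_subset (F.mem_edgeFinset.mpr (F.mem_edgeSet.mpr hab)))
  exact ⟨i, hi, h.mem_of_mem_edge i hi _ hab a (Sym2.mem_mk_left a b),
    h.mem_of_mem_edge i hi _ hab b (Sym2.mem_mk_right a b)⟩

lemma two_le_card {i : ι} (hi : i ∈ s) : 2 ≤ (w i).card := by
  obtain ⟨ε, hε⟩ := h.nonempty i hi
  induction ε using Sym2.ind with | h a b =>
  exact Finset.one_lt_card.mpr ⟨a, h.mem_of_mem_edge i hi _ hε a (Sym2.mem_mk_left a b),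
    b, h.mem_of_mem_edge i hi _ hε b (Sym2.mem_mk_right a b), (h.adj_of_mem hi hε).ne⟩

lemma card_le_one_of_card_eq_two {i : ι} (hi : i ∈ s) (hw : (w i).card = 2) : (T i).card ≤ 1 := by
  obtain ⟨x, y, -, hxy⟩ := Finset.card_eq_two.mp hw
  suffices ∀ ε ∈ T i, ε = s(x, y) from
    Finset.card_le_one.mpr fun ε hε ε' hε' => (this ε hε).trans (this ε' hε').symm
  intro ε hε
  induction ε using Sym2.ind with | h a b =>
  have hab := (h.adj_of_mem hi hε).ne
  have ha := h.mem_of_mem_edge i hi _ hε a (Sym2.mem_mk_left a b)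
  have hb := h.mem_of_mem_edge i hi _ hε b (Sym2.mem_mk_right a b)
  simp only [hxy, Finset.mem_insert, Finset.mem_singleton] at ha hb
  rcases ha with rfl | rfl <;> rcases hb with rfl | rfl <;> simp_all [Sym2.eq_swap]

lemma sum_card_le_card {u : Finset ι} (hu : u ⊆ s) (hsum : ∑ i ∈ u, (w i).card ≤ 2 * u.card) :
    ∑ i ∈ u, (T i).card ≤ u.card := by
  have htwo : ∀ i ∈ u, (w i).card = 2 := by
    refine fun i hi => ((Finset.sum_eq_sum_iff_of_le fun i hi => h.two_le_card (hu hi)).mp ?_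
      i hi).symm
    refine le_antisymm (Finset.sum_le_sum fun i hi => h.two_le_card (hu hi)) ?_
    simpa [mul_comm] using hsum
  simpa using Finset.sum_le_sum fun i hi => h.card_le_one_of_card_eq_two (hu hi) (htwo i hi)

lemma card_edgeFinset_le_sum : F.edgeFinset.card ≤ ∑ i ∈ s, (T i).card :=
  (Finset.card_le_card h.edgeFinset_subset).trans Finset.card_biUnion_le

lemma card_mul_add_one_le (hb : StrictlyOneBalanced F) {i : ι} (hi : i ∈ s) :
    (T i).card * (Fintype.card α - 1) + 1 ≤ F.edgeFinset.card * ((w i).card - 1) :=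
  hb.card_mul_add_one_le (h.subset_edgeFinset i hi) (h.mem_of_mem_edge i hi)
    (h.two_le_card hi) (h.ne_edgeFinset i hi)

/-- Summing the balance inequalities over the cover forces the vertex bound to be tight. -/
lemma sum_card_eq (hb : StrictlyOneBalanced F) (hs : s.Nonempty)
    (hsum : ∑ i ∈ s, (w i).card ≤ Fintype.card α + s.card) :
    ∑ i ∈ s, (w i).card = Fintype.card α + s.card := by
  have hbal : (∑ i ∈ s, (T i).card) * (Fintype.card α - 1) + s.card ≤
      F.edgeFinset.card * ∑ i ∈ s, ((w i).card - 1) := by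
    simpa [Finset.sum_add_distrib, Finset.sum_mul, Finset.mul_sum] using
      Finset.sum_le_sum fun i hi => h.card_mul_add_one_le hb hi
  set r := Fintype.card α
  set f := F.edgeFinset.card
  set K := ∑ i ∈ s, ((w i).card - 1)
  have hK : K + s.card = ∑ i ∈ s, (w i).card := by
    rw [Finset.card_eq_sum_ones, ← Finset.sum_add_distrib]
    exact Finset.sum_congr rfl fun i hi => Nat.sub_add_cancel (by linarith [h.two_le_card hi])
  have hrK : r ≤ K := by
    by_contra! hK
    have : f * K ≤ (∑ i ∈ s, (T i).card) * (r - 1) :=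
      (Nat.mul_le_mul_left f (by omega)).trans (Nat.mul_le_mul_right _ h.card_edgeFinset_le_sum)
    have := hs.card_pos
    omega
  omega

lemma one_le_traceDegree (h3 : ThreeConnected F) (a : α) : 1 ≤ traceDegree s w a := by
  obtain ⟨b, hab⟩ := h3.exists_adj a
  obtain ⟨i, hi, ha, -⟩ := h.exists_mem_of_adj hab
  exact Finset.card_pos.mpr ⟨i, Finset.mem_filter.mpr ⟨hi, ha⟩⟩

lemma sum_traceDegree_sub_one (h3 : ThreeConnected F)
    (hsum : ∑ i ∈ s, (w i).card = Fintype.card α + s.card) :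
    ∑ a, (traceDegree s w a - 1) = s.card := by
  have hdeg := sum_card_filter_eq_sum_traceDegree s w (fun _ => True)
  simp only [Finset.filter_true] at hdeg
  have : ∑ a, (traceDegree s w a - 1) + Fintype.card α = ∑ a, traceDegree s w a := by
    rw [← Finset.card_univ, Finset.card_eq_sum_ones, ← Finset.sum_add_distrib]
    exact Finset.sum_congr rfl fun a _ => Nat.sub_add_cancel (h.one_le_traceDegree h3 a)
  omega

lemma mem_of_adj {i : ι} (hi : i ∈ s) {a b : α} (ha : a ∈ w i)
    (hdeg : traceDegree s w a < 2) (hab : F.Adj a b) : b ∈ w i := by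
  obtain ⟨j, hj, haj, hbj⟩ := h.exists_mem_of_adj hab
  obtain rfl : j = i :=
    Finset.card_le_one.mp (Nat.le_of_lt_succ hdeg) j (by simp [hj, haj]) i (by simp [hi, ha])
  exact hbj

lemma two_lt_card_filter (h3 : ThreeConnected F) {i : ι} (hi : i ∈ s)
    (hw : w i ≠ Finset.univ) {a : α} (ha : a ∈ w i) (hdeg : traceDegree s w a < 2) :
    2 < ((w i).filter (2 ≤ traceDegree s w ·)).card := by
  have := h3.two_lt_card_sdiff (Finset.filter_subset (traceDegree s w · < 2) (w i))
    ⟨a, Finset.mem_filter.mpr ⟨ha, hdeg⟩⟩ hw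
    fun b hb c hbc => h.mem_of_adj hi (Finset.mem_filter.mp hb).1 (Finset.mem_filter.mp hb).2 hbc
  rwa [← Finset.filter_not, Finset.filter_congr fun b _ => not_lt] at this

lemma two_le_traceDegree (h3 : ThreeConnected F)
    (hsum : ∑ i ∈ s, (w i).card = Fintype.card α + s.card)
    (hw : ∀ i ∈ s, w i ≠ Finset.univ) (a : α) : 2 ≤ traceDegree s w a := by
  classical
  by_contra! ha
  obtain ⟨i₀, hi₀⟩ := Finset.card_pos.mp (h.one_le_traceDegree h3 a)
  obtain ⟨hi₀, hai₀⟩ := Finset.mem_filter.mp hi₀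
  set B := fun i => ((w i).filter (2 ≤ traceDegree s w ·)).card
  have hB : ∀ i ∈ s, 2 ≤ B i := by
    intro i hi
    by_cases hP : ∃ b ∈ w i, traceDegree s w b < 2
    · obtain ⟨b, hb, hdb⟩ := hP
      exact (h.two_lt_card_filter h3 hi (hw i hi) hb hdb).le
    · push Not at hP
      simpa [B, Finset.filter_true_of_mem hP] using h.two_le_card hi
  have hlow : 2 * s.card + 1 ≤ ∑ i ∈ s, B i := by
    have h3B : 2 < B i₀ := h.two_lt_card_filter h3 hi₀ (hw i₀ hi₀) hai₀ ha
    have hrest := Finset.card_nsmul_le_sum (s.erase i₀) (fun i => B i) 2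
      fun i hi => hB i (Finset.mem_of_mem_erase hi)
    rw [smul_eq_mul, Finset.card_erase_of_mem hi₀] at hrest
    rw [← Finset.add_sum_erase s (fun i => B i) hi₀]
    have := Finset.card_pos.mpr ⟨i₀, hi₀⟩
    omega
  have hup : ∑ i ∈ s, B i ≤ 2 * s.card := by
    rw [sum_card_filter_eq_sum_traceDegree, ← h.sum_traceDegree_sub_one h3 hsum]
    exact sum_filter_two_le_le _
  omega

lemma card_add_one_eq (hb : StrictlyOneBalanced F)
    (hsum : ∑ i ∈ s, (w i).card = Fintype.card α + s.card) {i : ι} (hi : i ∈ s)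
    (hw : w i = Finset.univ) : (T i).card + 1 = F.edgeFinset.card := by
  classical
  have hwi : (w i).card = Fintype.card α := by rw [hw, Finset.card_univ]
  have hu : ∑ j ∈ s.erase i, (w j).card = s.card := by
    have := Finset.add_sum_erase s (fun j => (w j).card) hi
    omega
  have hu2 := Finset.card_nsmul_le_sum (s.erase i) (fun j => (w j).card) 2
    fun j hj => h.two_le_card (Finset.mem_of_mem_erase hj)
  have hune : (s.erase i).Nonempty :=
    Finset.nonempty_of_sum_ne_zero (by rw [hu]; exact (Finset.card_pos.mpr ⟨i, hi⟩).ne')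
  have hucard : (s.erase i).card + 1 = s.card := Finset.card_erase_add_one hi
  rw [smul_eq_mul] at hu2
  have hTu := h.sum_card_le_card (Finset.erase_subset i s) (by have := hune.card_pos; omega)
  have hcov := h.card_edgeFinset_le_sum
  rw [← Finset.add_sum_erase s (fun j => (T j).card) hi] at hcov
  have hlt : (T i).card < F.edgeFinset.card := by
    have := h.card_mul_add_one_le hb hi
    rw [hwi] at this
    by_contra! hge
    have := Nat.mul_le_mul_right (Fintype.card α - 1) hge
    omega
  omega

lemma exists_eq_univ (h3 : ThreeConnected F)
    (hsum : ∑ i ∈ s, (w i).card = Fintype.card α + s.card) : ∃ i ∈ s, w i = Finset.univ := by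
  by_contra! hw
  have hdeg := h.two_le_traceDegree h3 hsum hw
  have hrm : Fintype.card α ≤ s.card := by
    rw [← h.sum_traceDegree_sub_one h3 hsum]
    simpa using Finset.card_nsmul_le_sum Finset.univ (traceDegree s w · - 1) 1
      fun a _ => by have := hdeg a; omega
  have hmr := Finset.card_nsmul_le_sum s (fun i => (w i).card) 2 fun i hi => h.two_le_card hi
  rw [smul_eq_mul, hsum] at hmr
  have hT := h.sum_card_le_card subset_rfl (by omega)
  have := h.card_edgeFinset_le_sum
  have := h3.three_mul_card_le
  have := h3.1
  omega

theorem exists_eq_univ_card_add_one_eq (h3 : ThreeConnected F) (hb : StrictlyOneBalanced F)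
    (hsum : ∑ i ∈ s, (w i).card ≤ Fintype.card α + s.card) :
    ∃ i ∈ s, w i = Finset.univ ∧ (T i).card + 1 = F.edgeFinset.card := by
  obtain ⟨a⟩ : Nonempty α := Fintype.card_pos_iff.mp (by linarith [h3.1])
  obtain ⟨i, hi⟩ := Finset.card_pos.mp (h.one_le_traceDegree h3 a)
  have hsum' := h.sum_card_eq hb ⟨i, (Finset.mem_filter.mp hi).1⟩ hsum
  obtain ⟨i, hi, hw⟩ := h.exists_eq_univ h3 hsum'
  exact ⟨i, hi, hw, h.card_add_one_eq hb hsum' hi hw⟩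

end IsTraceCover

end TraceCover

section Traces

variable {V : Type*} [DecidableEq V] {F : SimpleGraph α} {φ : α ↪ V} {E : Finset (Sym2 V)}

omit [Fintype α] [DecidableEq V] in
lemma map_mem_iff_of_copy (hE : (↑E : Set (Sym2 V)) = Sym2.map φ '' F.edgeSet)
    {ε : Sym2 α} : Sym2.map φ ε ∈ E ↔ ε ∈ F.edgeSet := by
  rw [← Finset.mem_coe, hE, (Sym2.map.injective φ.injective).mem_set_image]

omit [DecidableEq V] in
lemma card_eq_of_copy [DecidableRel F.Adj]
    (hE : (↑E : Set (Sym2 V)) = Sym2.map φ '' F.edgeSet) : E.card = F.edgeFinset.card := by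
  rw [← Set.ncard_coe_finset, hE, Set.ncard_image_of_injective _ (Sym2.map.injective φ.injective),
    ← SimpleGraph.coe_edgeFinset, Set.ncard_coe_finset]

lemma vertsOf_eq_of_copy (hF : ∀ a, ∃ b, F.Adj a b)
    (hE : (↑E : Set (Sym2 V)) = Sym2.map φ '' F.edgeSet) :
    vertsOf E = Finset.univ.map φ := by
  ext x
  simp only [mem_vertsOf, Finset.mem_map, Finset.mem_univ, true_and]
  constructor
  · rintro ⟨e, he, hx⟩
    obtain ⟨ε, -, rfl⟩ : e ∈ Sym2.map φ '' F.edgeSet := hE ▸ Finset.mem_coe.mpr he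
    obtain ⟨a, -, rfl⟩ := Sym2.mem_map.mp hx
    exact ⟨a, rfl⟩
  · rintro ⟨a, rfl⟩
    obtain ⟨b, hab⟩ := hF a
    exact ⟨_, (map_mem_iff_of_copy hE).mpr hab, Sym2.mem_map.mpr ⟨a, Sym2.mem_mk_left a b, rfl⟩⟩

def vertexTrace (φ : α ↪ V) (E : Finset (Sym2 V)) : Finset α :=
  Finset.univ.filter (φ · ∈ vertsOf E)

def edgeTrace (F : SimpleGraph α) [DecidableRel F.Adj] (φ : α ↪ V) (E : Finset (Sym2 V)) :
    Finset (Sym2 α) :=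
  F.edgeFinset.filter (Sym2.map φ · ∈ E)

lemma map_mem_vertsOf_of_mem_edgeTrace [DecidableRel F.Adj] {ε : Sym2 α}
    (hε : ε ∈ edgeTrace F φ E) {a : α} (ha : a ∈ ε) : φ a ∈ vertsOf E :=
  mem_vertsOf.mpr ⟨_, (Finset.mem_filter.mp hε).2, Sym2.mem_map.mpr ⟨a, ha, rfl⟩⟩

variable {E₀ : Finset (Sym2 V)} {𝒮 : Finset (Finset (Sym2 V))}

lemma isTraceCover_traces [DecidableEq α] [DecidableRel F.Adj]
    (hE₀ : (↑E₀ : Set (Sym2 V)) = Sym2.map φ '' F.edgeSet) (hcopies : ∀ E ∈ 𝒮, IsCopy F E)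
    (hne : ∀ E ∈ 𝒮, E ≠ E₀) (hcov : ∀ e ∈ E₀, ∃ E ∈ 𝒮, e ∈ E)
    (hmeet : ∀ E ∈ 𝒮, ∃ e ∈ E₀, e ∈ E) :
    IsTraceCover F 𝒮 (vertexTrace φ) (edgeTrace F φ) where
  subset_edgeFinset _ _ := Finset.filter_subset _ _
  mem_of_mem_edge _ _ _ hε a ha :=
    Finset.mem_filter.mpr ⟨Finset.mem_univ a, map_mem_vertsOf_of_mem_edgeTrace hε ha⟩
  nonempty E hE := by
    obtain ⟨e, he₀, he⟩ := hmeet E hE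
    obtain ⟨ε, hε, rfl⟩ : e ∈ Sym2.map φ '' F.edgeSet := hE₀ ▸ Finset.mem_coe.mpr he₀
    exact ⟨ε, Finset.mem_filter.mpr ⟨F.mem_edgeFinset.mpr hε, he⟩⟩
  ne_edgeFinset E hE htop := by
    obtain ⟨ψ, hψ⟩ := hcopies E hE
    refine hne E hE (Finset.eq_of_subset_of_card_le (fun e he₀ => ?_)
      (by rw [card_eq_of_copy hE₀, card_eq_of_copy hψ])).symm
    obtain ⟨ε, hε, rfl⟩ : e ∈ Sym2.map φ '' F.edgeSet := hE₀ ▸ Finset.mem_coe.mpr he₀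
    rw [← F.mem_edgeFinset, ← htop] at hε
    exact (Finset.mem_filter.mp hε).2
  edgeFinset_subset ε hε := by
    obtain ⟨E, hE, hεE⟩ := hcov _ ((map_mem_iff_of_copy hE₀).mpr (F.mem_edgeFinset.mp hε))
    exact Finset.mem_biUnion.mpr ⟨E, hE, Finset.mem_filter.mpr ⟨hε, hεE⟩⟩

omit [Fintype α] in
lemma configConnected_of_cover (hF : F.Preconnected)
    (hE₀ : (↑E₀ : Set (Sym2 V)) = Sym2.map φ '' F.edgeSet) (hcov : ∀ e ∈ E₀, ∃ E ∈ 𝒮, e ∈ E)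
    (hmeet : ∀ E ∈ 𝒮, ∃ e ∈ E₀, e ∈ E) : ConfigConnected 𝒮 := by
  set R : V → V → Prop := fun x y => ∃ E ∈ 𝒮, x ∈ vertsOf E ∧ y ∈ vertsOf E
  have hchain : ∀ a b, Relation.ReflTransGen R (φ a) (φ b) := by
    refine fun a b => ((F.reachable_iff_reflTransGen a b).mp (hF a b)).lift φ fun a b hab => ?_
    obtain ⟨E, hE, habE⟩ := hcov _ ((map_mem_iff_of_copy hE₀).mpr (F.mem_edgeSet.mpr hab))
    exact ⟨E, hE, mem_vertsOf.mpr ⟨_, habE, Sym2.mem_map.mpr ⟨a, Sym2.mem_mk_left a b, rfl⟩⟩,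
      mem_vertsOf.mpr ⟨_, habE, Sym2.mem_map.mpr ⟨b, Sym2.mem_mk_right a b, rfl⟩⟩⟩
  have hnear : ∀ x ∈ 𝒮.sup vertsOf, ∃ a, R x (φ a) := by
    intro x hx
    obtain ⟨E, hE, hxE⟩ := Finset.mem_sup.mp hx
    obtain ⟨e, he₀, he⟩ := hmeet E hE
    obtain ⟨ε, -, rfl⟩ : e ∈ Sym2.map φ '' F.edgeSet := hE₀ ▸ Finset.mem_coe.mpr he₀
    exact ⟨ε.out.1, E, hE, hxE,
      mem_vertsOf.mpr ⟨_, he, Sym2.mem_map.mpr ⟨_, ε.out_fst_mem, rfl⟩⟩⟩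
  intro x hx y hy
  obtain ⟨a, hxa⟩ := hnear x hx
  obtain ⟨b, E, hE, hyE, hbE⟩ := hnear y hy
  exact .head hxa ((hchain a b).tail ⟨E, hE, hbE, hyE⟩)

lemma NoAvoidableConfig.mul_card_le {r : ℕ} {𝓕 : Finset (Finset (Sym2 V))}
    (hav : NoAvoidableConfig r 𝓕) (h𝒮 : 𝒮 ⊆ 𝓕) (hne : 𝒮.Nonempty) (hconn : ConfigConnected 𝒮)
    (hcard : 𝒮.card ≤ 2 * r.choose 2) : (r - 1) * 𝒮.card ≤ (𝒮.sup vertsOf).card := by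
  by_contra! hlt
  have hr : 1 ≤ r := by
    by_contra! hr
    simp [Nat.lt_one_iff.mp hr] at hlt
  refine hav ⟨𝒮, h𝒮, hne, hconn, hcard, ?_⟩
  zify [hr] at hlt
  linarith

lemma card_sup_vertsOf_add_sum_le (𝒮 : Finset (Finset (Sym2 V))) (φ : α ↪ V) :
    (𝒮.sup vertsOf).card + ∑ E ∈ 𝒮, (vertexTrace φ E).card ≤
      Fintype.card α + ∑ E ∈ 𝒮, (vertsOf E).card := by
  set V₀ := Finset.univ.map φ
  have hsplit : ∀ E, (vertsOf E \ V₀).card + (vertexTrace φ E).card = (vertsOf E).card := by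
    intro E
    rw [← Finset.card_sdiff_add_card_inter (vertsOf E) V₀, vertexTrace, ← Finset.card_map φ]
    congr 2
    ext x
    simp only [V₀, Finset.mem_map, Finset.mem_filter, Finset.mem_univ, true_and, Finset.mem_inter]
    constructor
    · rintro ⟨a, ha, rfl⟩
      exact ⟨ha, a, rfl⟩
    · rintro ⟨hx, a, rfl⟩
      exact ⟨a, hx, rfl⟩
  have hsub : 𝒮.sup vertsOf ⊆ V₀ ∪ 𝒮.biUnion (vertsOf · \ V₀) := by
    intro x hx
    obtain ⟨E, hE, hxE⟩ := Finset.mem_sup.mp hx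
    by_cases hx₀ : x ∈ V₀
    · exact Finset.mem_union_left _ hx₀
    · exact Finset.mem_union_right _
        (Finset.mem_biUnion.mpr ⟨E, hE, Finset.mem_sdiff.mpr ⟨hxE, hx₀⟩⟩)
  calc (𝒮.sup vertsOf).card + ∑ E ∈ 𝒮, (vertexTrace φ E).card
      ≤ V₀.card + ∑ E ∈ 𝒮, (vertsOf E \ V₀).card + ∑ E ∈ 𝒮, (vertexTrace φ E).card := by
        gcongr
        exact (Finset.card_le_card hsub).trans
          ((Finset.card_union_le _ _).trans (Nat.add_le_add_left Finset.card_biUnion_le _))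
    _ = Fintype.card α + ∑ E ∈ 𝒮, (vertsOf E).card := by
        rw [add_assoc, ← Finset.sum_add_distrib, Finset.sum_congr rfl fun E _ => hsplit E,
          Finset.card_map, Finset.card_univ]

lemma AddDeleteRigid.card_edgeTrace_add_one_ne [DecidableRel F.Adj] (hrig : AddDeleteRigid F)
    {φ₀ : α ↪ V} (hE : (↑E : Set (Sym2 V)) = Sym2.map φ '' F.edgeSet)
    (hw : vertexTrace φ₀ E = Finset.univ) :
    (edgeTrace F φ₀ E).card + 1 ≠ F.edgeFinset.card := by
  classical
  have hrange : ∀ a, ∃ c, φ c = φ₀ a := by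
    intro a
    have ha : a ∈ vertexTrace φ₀ E := by rw [hw]; exact Finset.mem_univ a
    obtain ⟨e, he, hx⟩ := mem_vertsOf.mp (Finset.mem_filter.mp ha).2
    obtain ⟨ε, -, rfl⟩ : e ∈ Sym2.map φ '' F.edgeSet := hE ▸ Finset.mem_coe.mpr he
    obtain ⟨c, -, hc⟩ := Sym2.mem_map.mp hx
    exact ⟨c, hc⟩
  choose χ hχ using hrange
  have hbij : Function.Bijective χ := Finite.injective_iff_bijective.mp fun a b h =>
    φ₀.injective (by rw [← hχ, ← hχ, h])
  -- `G` is `E` read back on `α` through `φ₀`; it is `F` relabelled by `χ`.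
  set G := (F.map φ).comap φ₀
  let e : G ≃g F :=
    { toEquiv := Equiv.ofBijective χ hbij
      map_rel_iff' := by intro a b; simp [G, ← hχ] }
  have hmapE : (F.map φ).edgeSet = ↑E := by rw [SimpleGraph.edgeSet_map, hE]; rfl
  have hmem : ∀ ε, ε ∈ G.edgeSet ↔ Sym2.map φ₀ ε ∈ E := by
    intro ε
    induction ε using Sym2.ind with | h a b => ?_
    rw [Sym2.map_mk, ← Finset.mem_coe, ← hmapE]
    rfl
  have hdiff : F.edgeFinset \ G.edgeFinset = F.edgeFinset \ edgeTrace F φ₀ E := by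
    ext ε
    simp only [Finset.mem_sdiff, SimpleGraph.mem_edgeFinset, edgeTrace, Finset.mem_filter, hmem]
    tauto
  have := hrig.card_edgeFinset_sdiff_ne_one e
  have hsub : edgeTrace F φ₀ E ⊆ F.edgeFinset := Finset.filter_subset _ _
  rw [hdiff, Finset.card_sdiff_of_subset hsub] at this
  omega

lemma sum_card_vertexTrace_le [DecidableRel F.Adj] (h3 : ThreeConnected F)
    {𝓕 : Finset (Finset (Sym2 V))} (hav : NoAvoidableConfig (Fintype.card α) 𝓕)
    (h𝒮 : 𝒮 ⊆ 𝓕) (hcopies : ∀ E ∈ 𝒮, IsCopy F E)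
    (hE₀ : (↑E₀ : Set (Sym2 V)) = Sym2.map φ '' F.edgeSet) (hcard : 𝒮.card ≤ E₀.card)
    (hcov : ∀ e ∈ E₀, ∃ E ∈ 𝒮, e ∈ E) (hmeet : ∀ E ∈ 𝒮, ∃ e ∈ E₀, e ∈ E) :
    ∑ E ∈ 𝒮, (vertexTrace φ E).card ≤ Fintype.card α + 𝒮.card := by
  rw [card_eq_of_copy hE₀] at hcard
  have hne : 𝒮.Nonempty := by
    obtain ⟨e, he⟩ : E₀.Nonempty := Finset.card_pos.mp (by
      rw [card_eq_of_copy hE₀]; linarith [h3.three_mul_card_le, h3.1])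
    obtain ⟨E, hE, -⟩ := hcov e he
    exact ⟨E, hE⟩
  have hnull := hav.mul_card_le h𝒮 hne (configConnected_of_cover h3.preconnected hE₀ hcov hmeet)
    (by linarith [F.card_edgeFinset_le_card_choose_two])
  have hcount := card_sup_vertsOf_add_sum_le 𝒮 φ
  have hverts : ∑ E ∈ 𝒮, (vertsOf E).card = ∑ _E ∈ 𝒮, Fintype.card α :=
    Finset.sum_congr rfl fun E hE => by
      obtain ⟨ψ, hψ⟩ := hcopies E hE
      rw [vertsOf_eq_of_copy h3.exists_adj hψ, Finset.card_map, Finset.card_univ]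
  rw [hverts, Finset.sum_const, smul_eq_mul] at hcount
  rw [Nat.sub_one_mul, mul_comm] at hnull
  omega

end Traces

end

/-- if `F` is nice and `𝓕` is an `F`-graph whose underlying
multi-hypergraph contains no avoidable configuration, then every copy of `F` contained in
the union graph of `𝓕` is already an `F`-edge of `𝓕`. -/
theorem stmt_15 {α V : Type*} [Fintype α] [DecidableEq V]
    (F : SimpleGraph α) (hF : Nice F)
    (𝓕 : Finset (Finset (Sym2 V))) (hcopies : ∀ E ∈ 𝓕, IsCopy F E)
    (hav : NoAvoidableConfig (Fintype.card α) 𝓕) :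
    ∀ E₀ : Finset (Sym2 V), IsCopy F E₀ → (∀ e ∈ E₀, ∃ E ∈ 𝓕, e ∈ E) → E₀ ∈ 𝓕 := by
  classical
  obtain ⟨hb, h3, hrig⟩ := hF
  rintro E₀ ⟨φ₀, hE₀⟩ hcover
  by_contra hE₀𝓕
  obtain ⟨𝒮, h𝒮, hcard, hcov, hmeet⟩ := exists_subfamily_card_le hcover
  have hcopies𝒮 : ∀ E ∈ 𝒮, IsCopy F E := fun E hE => hcopies E (h𝒮 hE)
  have htrace := isTraceCover_traces hE₀ hcopies𝒮 (fun E hE h => hE₀𝓕 (h ▸ h𝒮 hE)) hcov hmeet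
  obtain ⟨E, hE, hw, hT⟩ := htrace.exists_eq_univ_card_add_one_eq h3 hb
    (sum_card_vertexTrace_le h3 hav h𝒮 hcopies𝒮 hE₀ hcard hcov hmeet)
  obtain ⟨φ, hφ⟩ := hcopies𝒮 E hE
  exact hrig.card_edgeTrace_add_one_ne hφ hw hT
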